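/- As a gl(1|1)-module, V^{⊗k} decomposes as the direct sum over ℓ = 0,...,k−1 of (k−1 choose ℓ) copies of the 2-dimensional irreducible module L[ℓ+1, k−1−ℓ]; in particular the number of irreducible summands of V^{⊗k} isotypic to weight [ℓ+1,k−1−ℓ] equals the number of ℓ-element subsets of {1,...,k−1}. -/
import Mathlib


noncomputable section

/-- `V^{⊗k}` for the two-dimensional module `V = ℂx ⊕ ℂy`, realized as functions on
words `w : Fin k → Bool` (`false` = `x` (even), `true` = `y` (odd)). -/
abbrev TensorV (k : ℕ) : Type := (Fin k → Bool) → ℂ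

/-- The sign `(-1)^{#odd factors strictly before position i}` in the graded Leibniz rule. -/
def glSgn {k : ℕ} (w : Fin k → Bool) (i : Fin k) : ℂ :=
  (-1 : ℂ) ^ (Finset.univ.filter (fun j => j < i ∧ w j = true)).card

/-- The action of `e ∈ gl(1|1)` on `V^{⊗k}` (graded Leibniz rule, `e·y = x`, `e·x = 0`). -/
def Eop (k : ℕ) : TensorV k →ₗ[ℂ] TensorV k :=
  LinearMap.pi fun w =>
    ∑ i ∈ Finset.univ.filter (fun i => w i = false),
      glSgn w i • LinearMap.proj (R := ℂ) (φ := fun _ => ℂ) (Function.update w i true)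

/-- The action of `f ∈ gl(1|1)` on `V^{⊗k}` (graded Leibniz rule, `f·x = y`, `f·y = 0`). -/
def Fop (k : ℕ) : TensorV k →ₗ[ℂ] TensorV k :=
  LinearMap.pi fun w =>
    ∑ i ∈ Finset.univ.filter (fun i => w i = true),
      glSgn w i • LinearMap.proj (R := ℂ) (φ := fun _ => ℂ) (Function.update w i false)

/-- The action of `h₁ ∈ gl(1|1)` on `V^{⊗k}`: a word is scaled by its number of `x`'s. -/
def H1op (k : ℕ) : TensorV k →ₗ[ℂ] TensorV k :=
  LinearMap.pi fun w =>
    ((Finset.univ.filter (fun i => w i = false)).card : ℂ) •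
      LinearMap.proj (R := ℂ) (φ := fun _ => ℂ) w

/-- The action of `h₂ ∈ gl(1|1)` on `V^{⊗k}`: a word is scaled by its number of `y`'s. -/
def H2op (k : ℕ) : TensorV k →ₗ[ℂ] TensorV k :=
  LinearMap.pi fun w =>
    ((Finset.univ.filter (fun i => w i = true)).card : ℂ) •
      LinearMap.proj (R := ℂ) (φ := fun _ => ℂ) w

/-- The standard basis vector of `V^{⊗k}` indexed by the word `w`. -/
def bv {k : ℕ} (w : Fin k → Bool) : TensorV k := fun w' => if w' = w then 1 else 0

/-- The word of `y ⊗ u_s ∈ V^{⊗(n+1)}`, where `u_s = u₁⊗⋯⊗u_n` has `u_i = x`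
iff `i ∈ s`. -/
def wordOf {n : ℕ} (s : Finset (Fin n)) : Fin (n + 1) → Bool :=
  Fin.cons true (fun j => if j ∈ s then false else true)

/-- The highest weight vector `v_s = e · (y ⊗ u_s) ∈ V^{⊗(n+1)}`. -/
def vStd {n : ℕ} (s : Finset (Fin n)) : TensorV (n + 1) := Eop (n + 1) (bv (wordOf s))

end

/-- The subspace `V_s = span{v_s, f·v_s} ⊆ V^{⊗(n+1)}`. -/
noncomputable def Vsub {n : ℕ} (s : Finset (Fin n)) : Submodule ℂ (TensorV (n + 1)) :=
  Submodule.span ℂ {vStd s, Fop (n + 1) (vStd s)}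

noncomputable section

theorem glSgn_update_of_not_lt {k : ℕ} (w : Fin k → Bool) {p i : Fin k} (h : ¬ p < i) (b : Bool) :
    glSgn (Function.update w p b) i = glSgn w i := by
  unfold glSgn
  congr 2
  apply Finset.filter_congr
  intro j _
  by_cases hj : j = p
  · subst hj
    constructor <;> (rintro ⟨h1, -⟩; exact absurd h1 h)
  · rw [Function.update_of_ne hj]

theorem glSgn_update_of_lt {k : ℕ} (w : Fin k → Bool) {p i : Fin k} (h : p < i) {b : Bool}
    (hb : w p ≠ b) : glSgn (Function.update w p b) i = - glSgn w i := by
  unfold glSgn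
  set S := Finset.univ.filter (fun j => j < i ∧ w j = true) with hS
  set S' := Finset.univ.filter (fun j => j < i ∧ Function.update w p b j = true) with hS'
  cases b with
  | true =>
    have hwp : w p = false := by revert hb; cases w p <;> simp
    have : S' = insert p S := by
      ext j
      by_cases hj : j = p
      · subst hj; simp [hS', h]
      · simp [hS, hS', Function.update_of_ne hj, hj]
    have hp : p ∉ S := by simp [hS, hwp]
    rw [this, Finset.card_insert_of_notMem hp, pow_succ]
    ring
  | false =>
    have hwp : w p = true := by revert hb; cases w p <;> simp
    have : S = insert p S' := by
      ext j
      by_cases hj : j = p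
      · subst hj; simp [hS, h, hwp]
      · simp [hS, hS', Function.update_of_ne hj, hj]
    have hp : p ∉ S' := by simp [hS']
    rw [this, Finset.card_insert_of_notMem hp, pow_succ]
    ring

theorem glSgn_mul_self {k : ℕ} (w : Fin k → Bool) (i : Fin k) : glSgn w i * glSgn w i = 1 := by
  unfold glSgn
  rw [← mul_pow]
  norm_num

theorem Eop_apply {k : ℕ} (x : TensorV k) (w : Fin k → Bool) :
    Eop k x w = ∑ i ∈ Finset.univ.filter (fun i => w i = false),
      glSgn w i * x (Function.update w i true) := by
  simp [Eop, LinearMap.pi_apply, LinearMap.sum_apply, smul_eq_mul]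

theorem Fop_apply {k : ℕ} (x : TensorV k) (w : Fin k → Bool) :
    Fop k x w = ∑ i ∈ Finset.univ.filter (fun i => w i = true),
      glSgn w i * x (Function.update w i false) := by
  simp [Fop, LinearMap.pi_apply, LinearMap.sum_apply, smul_eq_mul]

/-- the term in the expansion of `E∘E`. -/
def ee {k : ℕ} (x : TensorV k) (w : Fin k → Bool) (i j : Fin k) : ℂ :=
  glSgn w i * (glSgn (Function.update w i true) j *
    x (Function.update (Function.update w i true) j true))

theorem EE_zero {k : ℕ} (x : TensorV k) (w : Fin k → Bool) : Eop k (Eop k x) w = 0 := by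
  classical
  set A := Finset.univ.filter (fun i => w i = false) with hAdef
  have hmemA : ∀ i, i ∈ A ↔ w i = false := by intro i; simp [hAdef]
  have hA : ∀ i, w i = false →
      Finset.univ.filter (fun j => Function.update w i true j = false) = A.erase i := by
    intro i hi; ext j
    by_cases hj : j = i
    · subst hj; simp
    · simp [Function.update_of_ne hj, hj, hAdef]
  have anti : ∀ i ∈ A, ∀ j ∈ A.erase i, ee x w i j = - ee x w j i := by
    intro i hi j hj
    have hji : j ≠ i := (Finset.mem_erase.mp hj).1
    have hwi : w i = false := (hmemA i).mp hi
    have hwj : w j = false := (hmemA j).mp ((Finset.mem_erase.mp hj).2)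
    have harg : Function.update (Function.update w i true) j true
        = Function.update (Function.update w j true) i true := Function.update_comm hji.symm _ _ _
    unfold ee
    rw [harg]
    rcases lt_or_gt_of_ne hji with hlt | hgt
    · rw [glSgn_update_of_lt w hlt (by simp [hwj]),
        glSgn_update_of_not_lt w (not_lt_of_gt hlt) true]
      ring
    · rw [glSgn_update_of_lt w hgt (by simp [hwi]),
        glSgn_update_of_not_lt w (not_lt_of_gt hgt) true]
      ring
  have expand : Eop k (Eop k x) w = ∑ i ∈ A, ∑ j ∈ A.erase i, ee x w i j := by
    rw [Eop_apply]
    apply Finset.sum_congr rfl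
    intro i hi
    rw [Eop_apply, hA i ((hmemA i).mp hi), Finset.mul_sum]
    rfl
  have swap : (∑ i ∈ A, ∑ j ∈ A.erase i, ee x w i j)
      = ∑ j ∈ A, ∑ i ∈ A.erase j, ee x w i j := by
    apply Finset.sum_comm'
    intro i j
    constructor
    · rintro ⟨hi, hj⟩
      rcases Finset.mem_erase.mp hj with ⟨hne, hj'⟩
      exact ⟨Finset.mem_erase.mpr ⟨fun h => hne (h.symm ▸ rfl), hi⟩, hj'⟩
    · rintro ⟨hi, hj⟩
      rcases Finset.mem_erase.mp hi with ⟨hne, hi'⟩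
      exact ⟨hi', Finset.mem_erase.mpr ⟨fun h => hne (h.symm ▸ rfl), hj⟩⟩
  have neg : (∑ j ∈ A, ∑ i ∈ A.erase j, ee x w i j)
      = - ∑ i ∈ A, ∑ j ∈ A.erase i, ee x w i j := by
    rw [← Finset.sum_neg_distrib]
    apply Finset.sum_congr rfl
    intro j hj
    rw [← Finset.sum_neg_distrib]
    apply Finset.sum_congr rfl
    intro i hi
    have hiA : i ∈ A := (Finset.mem_erase.mp hi).2
    have : j ∈ A.erase i := Finset.mem_erase.mpr ⟨fun h => (Finset.mem_erase.mp hi).1 h.symm, hj⟩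
    rw [anti i hiA j this]
  rw [expand]
  have h2 := swap.trans neg
  linear_combination h2 / 2

/-- cross terms in `E∘F` -/
def efT {k : ℕ} (x : TensorV k) (w : Fin k → Bool) (i j : Fin k) : ℂ :=
  glSgn w i * (glSgn (Function.update w i true) j *
    x (Function.update (Function.update w i true) j false))

/-- cross terms in `F∘E` -/
def feT {k : ℕ} (x : TensorV k) (w : Fin k → Bool) (j i : Fin k) : ℂ :=
  glSgn w j * (glSgn (Function.update w j false) i *
    x (Function.update (Function.update w j false) i true))

theorem EFFE {k : ℕ} (x : TensorV k) (w : Fin k → Bool) :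
    Eop k (Fop k x) w + Fop k (Eop k x) w = (k : ℂ) * x w := by
  classical
  set A := Finset.univ.filter (fun i => w i = false) with hAdef
  set T := Finset.univ.filter (fun i => w i = true) with hTdef
  have hmemA : ∀ i, i ∈ A ↔ w i = false := by intro i; simp [hAdef]
  have hmemT : ∀ i, i ∈ T ↔ w i = true := by intro i; simp [hTdef]
  -- inner index sets
  have hTins : ∀ i, w i = false →
      Finset.univ.filter (fun j => Function.update w i true j = true) = insert i T := by
    intro i hi; ext j
    by_cases hj : j = i
    · subst hj; simp
    · simp [Function.update_of_ne hj, hj, hTdef]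
  have hAins : ∀ j, w j = true →
      Finset.univ.filter (fun i => Function.update w j false i = false) = insert j A := by
    intro j hj; ext i
    by_cases hij : i = j
    · subst hij; simp
    · simp [Function.update_of_ne hij, hij, hAdef]
  have hiT : ∀ i, w i = false → i ∉ T := by intro i hi h; rw [hmemT] at h; simp [hi] at h
  have hjA : ∀ j, w j = true → j ∉ A := by intro j hj h; rw [hmemA] at h; simp [hj] at h
  -- expansion of EF
  have expandEF : Eop k (Fop k x) w
      = ∑ i ∈ A, (x w + ∑ j ∈ T, efT x w i j) := by
    rw [Eop_apply]
    apply Finset.sum_congr rfl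
    intro i hi
    have hwi : w i = false := (hmemA i).mp hi
    rw [Fop_apply, hTins i hwi, Finset.sum_insert (hiT i hwi), mul_add, Finset.mul_sum]
    congr 1
    · have h1 : glSgn (Function.update w i true) i = glSgn w i :=
        glSgn_update_of_not_lt w (lt_irrefl i) true
      have h2 : Function.update (Function.update w i true) i false = w := by
        rw [Function.update_idem, ← hwi, Function.update_eq_self]
      rw [h1, h2, ← mul_assoc, glSgn_mul_self, one_mul]
  have expandFE : Fop k (Eop k x) w
      = ∑ j ∈ T, (x w + ∑ i ∈ A, feT x w j i) := by
    rw [Fop_apply]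
    apply Finset.sum_congr rfl
    intro j hj
    have hwj : w j = true := (hmemT j).mp hj
    rw [Eop_apply, hAins j hwj, Finset.sum_insert (hjA j hwj), mul_add, Finset.mul_sum]
    congr 1
    · have h1 : glSgn (Function.update w j false) j = glSgn w j :=
        glSgn_update_of_not_lt w (lt_irrefl j) false
      have h2 : Function.update (Function.update w j false) j true = w := by
        rw [Function.update_idem, ← hwj, Function.update_eq_self]
      rw [h1, h2, ← mul_assoc, glSgn_mul_self, one_mul]
  -- cross terms cancel
  have cancel : ∀ i ∈ A, ∀ j ∈ T, efT x w i j + feT x w j i = 0 := by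
    intro i hi j hj
    have hwi : w i = false := (hmemA i).mp hi
    have hwj : w j = true := (hmemT j).mp hj
    have hij : i ≠ j := by intro h; rw [h, hwj] at hwi; exact Bool.noConfusion hwi
    have harg : Function.update (Function.update w i true) j false
        = Function.update (Function.update w j false) i true :=
      Function.update_comm hij _ _ _
    unfold efT feT
    rw [harg]
    rcases lt_or_gt_of_ne hij with hlt | hgt
    · rw [glSgn_update_of_lt w hlt (by simp [hwi]),
        glSgn_update_of_not_lt w (not_lt_of_gt hlt) false]
      ring
    · rw [glSgn_update_of_lt w hgt (by simp [hwj]),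
        glSgn_update_of_not_lt w (not_lt_of_gt hgt) true]
      ring
  have hcross : (∑ i ∈ A, ∑ j ∈ T, efT x w i j) + (∑ j ∈ T, ∑ i ∈ A, feT x w j i) = 0 := by
    rw [Finset.sum_comm (s := T)]
    rw [← Finset.sum_add_distrib]
    apply Finset.sum_eq_zero
    intro i hi
    rw [← Finset.sum_add_distrib]
    exact Finset.sum_eq_zero fun j hj => cancel i hi j hj
  have hcard : (A.card : ℂ) + (T.card : ℂ) = (k : ℂ) := by
    have := Finset.card_filter_add_card_filter_not
      (s := (Finset.univ : Finset (Fin k))) (p := fun i => w i = false)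
    have hT' : Finset.univ.filter (fun i => ¬ (w i = false)) = T := by
      apply Finset.filter_congr; intro i _; simp [hTdef]
    rw [hT'] at this
    rw [← hAdef] at this
    rw [← Nat.cast_add, this]
    simp
  rw [expandEF, expandFE, Finset.sum_add_distrib, Finset.sum_add_distrib,
    Finset.sum_const, Finset.sum_const]
  have : ∀ (m : ℕ), m • x w = (m : ℂ) * x w := fun m => by
    rw [nsmul_eq_mul]
  rw [this, this]
  calc (A.card : ℂ) * x w + (∑ i ∈ A, ∑ j ∈ T, efT x w i j)
        + ((T.card : ℂ) * x w + ∑ j ∈ T, ∑ i ∈ A, feT x w j i)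
      = ((A.card : ℂ) + (T.card : ℂ)) * x w
        + ((∑ i ∈ A, ∑ j ∈ T, efT x w i j) + (∑ j ∈ T, ∑ i ∈ A, feT x w j i)) := by ring
    _ = (k : ℂ) * x w := by rw [hcard, hcross, add_zero]

theorem H1op_apply {k : ℕ} (x : TensorV k) (w : Fin k → Bool) :
    H1op k x w = ((Finset.univ.filter (fun i => w i = false)).card : ℂ) * x w := by
  simp [H1op, smul_eq_mul]

theorem H2op_apply {k : ℕ} (x : TensorV k) (w : Fin k → Bool) :
    H2op k x w = ((Finset.univ.filter (fun i => w i = true)).card : ℂ) * x w := by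
  simp [H2op, smul_eq_mul]

def yword {n : ℕ} (s : Finset (Fin n)) : Fin (n + 1) → Bool :=
  Fin.cons false (fun j => if j ∈ s then false else true)

theorem yword_zero {n : ℕ} (s : Finset (Fin n)) : yword s 0 = false := rfl

theorem update_yword_zero {n : ℕ} (s : Finset (Fin n)) :
    Function.update (yword s) 0 true = wordOf s := by
  funext j
  refine Fin.cases ?_ ?_ j
  · simp [wordOf]
  · intro p
    rw [Function.update_of_ne (Fin.succ_ne_zero p)]
    simp [yword, wordOf, Fin.cons_succ]

theorem wordOf_inj {n : ℕ} {s t : Finset (Fin n)} (h : wordOf s = wordOf t) : s = t := by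
  ext j
  have := congrFun h j.succ
  simp only [wordOf, Fin.cons_succ] at this
  by_cases hs : j ∈ s <;> by_cases ht : j ∈ t <;> simp [hs, ht] at this ⊢

theorem glSgn_zero {n : ℕ} (w : Fin (n + 1) → Bool) : glSgn w 0 = 1 := by
  simp [glSgn, Fin.not_lt_zero]

theorem vStd_apply_y {n : ℕ} (s t : Finset (Fin n)) :
    vStd t (yword s) = if s = t then 1 else 0 := by
  classical
  rw [vStd, Eop_apply]
  rw [Finset.sum_eq_single (0 : Fin (n + 1))]
  · rw [glSgn_zero, one_mul, update_yword_zero]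
    unfold bv
    by_cases h : s = t
    · subst h; simp
    · rw [if_neg (fun he => h (wordOf_inj he)), if_neg h]
  · intro i _ hne
    have h0 : Function.update (yword s) i true 0 = false := by
      rw [Function.update_of_ne (Ne.symm hne)]
      exact yword_zero s
    have hb : Function.update (yword s) i true ≠ wordOf t := by
      intro he
      have := congrFun he 0
      rw [h0] at this
      simp [wordOf] at this
    simp [bv, hb]
  · intro h
    exact absurd (by simp [yword_zero]) h

theorem card_falses_wordOf {n : ℕ} (s : Finset (Fin n)) :
    (Finset.univ.filter (fun i => wordOf s i = false)).card = s.card := by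
  have : Finset.univ.filter (fun i => wordOf s i = false)
      = s.map ⟨Fin.succ, Fin.succ_injective n⟩ := by
    ext i
    refine Fin.cases ?_ ?_ i
    · simp [wordOf, Fin.succ_ne_zero]
    · intro p
      simp only [Finset.mem_filter, Finset.mem_univ, true_and, Finset.mem_map,
        Function.Embedding.coeFn_mk, wordOf, Fin.cons_succ]
      constructor
      · intro h
        by_cases hp : p ∈ s
        · exact ⟨p, hp, rfl⟩
        · simp [hp] at h
      · rintro ⟨q, hq, hqs⟩
        have : q = p := Fin.succ_injective n hqs
        subst this
        simp [hq]
  rw [this, Finset.card_map]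

theorem wordOf_zero {n : ℕ} (s : Finset (Fin n)) : wordOf s 0 = true := rfl

theorem falses_of_vStd_ne_zero {n : ℕ} (s : Finset (Fin n)) (w' : Fin (n + 1) → Bool)
    (h0 : vStd s w' ≠ 0) :
    (Finset.univ.filter (fun i => w' i = false)).card = s.card + 1 := by
  classical
  rw [vStd, Eop_apply] at h0
  obtain ⟨i, hi, hne⟩ := Finset.exists_ne_zero_of_sum_ne_zero h0
  have hwi : w' i = false := (Finset.mem_filter.mp hi).2
  have hupd : Function.update w' i true = wordOf s := by
    by_contra hc
    simp [bv, hc] at hne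
  have hws : wordOf s i = true := by rw [← hupd, Function.update_self]
  have hw' : ∀ j, j ≠ i → w' j = wordOf s j := fun j hj => by
    rw [← hupd, Function.update_of_ne hj]
  have hfil : Finset.univ.filter (fun j => w' j = false)
      = insert i (Finset.univ.filter (fun j => wordOf s j = false)) := by
    ext j
    by_cases hj : j = i
    · subst hj; simp [hwi]
    · simp [hw' j hj, hj]
  have hniA : i ∉ Finset.univ.filter (fun j => wordOf s j = false) := by simp [hws]
  rw [hfil, Finset.card_insert_of_notMem hniA, card_falses_wordOf]

theorem card_filter_true_add {k : ℕ} (w : Fin k → Bool) :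
    (Finset.univ.filter (fun i => w i = false)).card
      + (Finset.univ.filter (fun i => w i = true)).card = k := by
  have := Finset.card_filter_add_card_filter_not
    (s := (Finset.univ : Finset (Fin k))) (p := fun i => w i = false)
  have hT' : Finset.univ.filter (fun i => ¬ (w i = false)) =
      Finset.univ.filter (fun i => w i = true) := by
    apply Finset.filter_congr; intro i _; simp
  rw [hT'] at this
  simpa using this

theorem H1_vStd {n : ℕ} (s : Finset (Fin n)) :
    H1op (n + 1) (vStd s) = ((s.card : ℂ) + 1) • vStd s := by
  funext w'
  rw [H1op_apply, Pi.smul_apply, smul_eq_mul]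
  by_cases h0 : vStd s w' = 0
  · rw [h0, mul_zero, mul_zero]
  · rw [falses_of_vStd_ne_zero s w' h0]
    push_cast
    ring

theorem H2_vStd {n : ℕ} (s : Finset (Fin n)) :
    H2op (n + 1) (vStd s) = ((n : ℂ) - (s.card : ℂ)) • vStd s := by
  funext w'
  rw [H2op_apply, Pi.smul_apply, smul_eq_mul]
  by_cases h0 : vStd s w' = 0
  · rw [h0, mul_zero, mul_zero]
  · have hfalse := falses_of_vStd_ne_zero s w' h0
    have hsum := card_filter_true_add w'
    have hle : s.card ≤ n := by
      have := Finset.card_le_univ s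
      simpa using this
    have htrue : (Finset.univ.filter (fun i => w' i = true)).card = n - s.card := by omega
    rw [htrue, Nat.cast_sub hle]


theorem Eop_vStd {n : ℕ} (t : Finset (Fin n)) : Eop (n + 1) (vStd t) = 0 := by
  funext w
  simp only [vStd]
  exact EE_zero (bv (wordOf t)) w

theorem EFop_vStd {n : ℕ} (t : Finset (Fin n)) :
    Eop (n + 1) (Fop (n + 1) (vStd t)) = ((n : ℂ) + 1) • vStd t := by
  funext w
  have h := EFFE (vStd t) w
  rw [Eop_vStd t, map_zero] at h
  rw [Pi.smul_apply, smul_eq_mul]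
  have h2 : Eop (n + 1) (Fop (n + 1) (vStd t)) w = ((n + 1 : ℕ) : ℂ) * vStd t w := by
    simpa using h
  rw [h2]
  push_cast
  ring

/-- the family of vectors spanning the `Vsub`'s -/
def Bfam (n : ℕ) : Finset (Fin n) × Bool → TensorV (n + 1) :=
  fun p => if p.2 then Fop (n + 1) (vStd p.1) else vStd p.1

theorem Bfam_linearIndependent (n : ℕ) : LinearIndependent ℂ (Bfam n) := by
  classical
  rw [Fintype.linearIndependent_iff]
  intro g hg
  have hnz : ((n : ℂ) + 1) ≠ 0 := Nat.cast_add_one_ne_zero n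
  have hvalE : ∀ (s t : Finset (Fin n)) (c : Bool),
      Eop (n + 1) (Bfam n (t, c)) (yword s) = if c ∧ s = t then (n : ℂ) + 1 else 0 := by
    intro s t c
    cases c
    · show Eop (n + 1) (vStd t) (yword s) = _
      rw [Eop_vStd t]
      simp
    · show Eop (n + 1) (Fop (n + 1) (vStd t)) (yword s) = _
      rw [EFop_vStd t, Pi.smul_apply, smul_eq_mul, vStd_apply_y]
      by_cases h : s = t <;> simp [h]
  have htrue : ∀ s, g (s, true) = 0 := by
    intro s
    have h1 : ∑ p : Finset (Fin n) × Bool, g p * Eop (n + 1) (Bfam n p) (yword s) = 0 := by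
      have := congrArg (fun x => Eop (n + 1) x (yword s)) hg
      simpa [map_sum, LinearMap.map_smul, Finset.sum_apply, Pi.smul_apply,
        smul_eq_mul] using this
    rw [Fintype.sum_prod_type] at h1
    have h2 : ∀ t : Finset (Fin n),
        (∑ c : Bool, g (t, c) * Eop (n + 1) (Bfam n (t, c)) (yword s))
        = if s = t then g (t, true) * ((n : ℂ) + 1) else 0 := by
      intro t
      rw [Fintype.sum_bool, hvalE s t true, hvalE s t false]
      by_cases h : s = t <;> simp [h]
    rw [Finset.sum_congr rfl (fun t _ => h2 t)] at h1
    rw [Finset.sum_ite_eq] at h1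
    simp only [Finset.mem_univ, if_true] at h1
    exact (mul_eq_zero.mp h1).resolve_right hnz
  intro p
  rcases p with ⟨s, c⟩
  cases c
  · -- evaluate hg at yword s
    have h1 : ∑ p : Finset (Fin n) × Bool, g p * Bfam n p (yword s) = 0 := by
      have := congrFun hg (yword s)
      simpa [Finset.sum_apply, Pi.smul_apply, smul_eq_mul] using this
    rw [Fintype.sum_prod_type] at h1
    have h2 : ∀ t : Finset (Fin n),
        (∑ c : Bool, g (t, c) * Bfam n (t, c) (yword s))
        = if s = t then g (t, false) else 0 := by
      intro t
      rw [Fintype.sum_bool, htrue t, zero_mul, zero_add]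
      show g (t, false) * vStd t (yword s) = _
      rw [vStd_apply_y]
      by_cases h : s = t <;> simp [h]
    rw [Finset.sum_congr rfl (fun t _ => h2 t), Finset.sum_ite_eq] at h1
    simpa using h1
  · exact htrue s

theorem Bfam_card (n : ℕ) :
    Fintype.card (Finset (Fin n) × Bool) = Module.finrank ℂ (TensorV (n + 1)) := by
  rw [show Module.finrank ℂ (TensorV (n + 1)) = Fintype.card (Fin (n + 1) → Bool) from
    Module.finrank_pi ℂ]
  rw [Fintype.card_prod, Fintype.card_finset, Fintype.card_bool, Fintype.card_fun,
    Fintype.card_bool, Fintype.card_fin, Fintype.card_fin]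
  ring

theorem Vsub_eq_span_image {n : ℕ} (s : Finset (Fin n)) :
    Vsub s = Submodule.span ℂ (Bfam n '' {p | p.1 = s}) := by
  rw [Vsub]
  congr 1
  ext x
  simp only [Set.mem_insert_iff, Set.mem_singleton_iff, Set.mem_image, Set.mem_setOf_eq]
  constructor
  · rintro (rfl | rfl)
    · exact ⟨(s, false), rfl, rfl⟩
    · exact ⟨(s, true), rfl, rfl⟩
  · rintro ⟨⟨t, c⟩, ht, rfl⟩
    obtain rfl : t = s := ht
    cases c
    · left; rfl
    · right; rfl

theorem Vsub_isInternal (n : ℕ) :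
    DirectSum.IsInternal (fun s : Finset (Fin n) => Vsub s) := by
  classical
  have hli := Bfam_linearIndependent n
  apply DirectSum.isInternal_submodule_of_iSupIndep_of_iSup_eq_top
  · intro s
    dsimp only
    rw [Vsub_eq_span_image]
    have h2 : (⨆ t, ⨆ _ : t ≠ s, (Vsub t : Submodule ℂ (TensorV (n + 1))))
        ≤ Submodule.span ℂ (Bfam n '' {p | p.1 ≠ s}) := by
      apply iSup_le; intro t; apply iSup_le; intro hts
      rw [Vsub_eq_span_image]
      apply Submodule.span_mono
      apply Set.image_mono
      intro p hp
      simp only [Set.mem_setOf_eq] at hp ⊢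
      rw [hp]; exact hts
    refine Disjoint.mono_right h2 ?_
    apply hli.disjoint_span_image
    rw [Set.disjoint_left]
    intro p hp hp'
    exact hp' hp
  · apply le_antisymm le_top
    have hb := (basisOfLinearIndependentOfCardEqFinrank hli (Bfam_card n)).span_eq
    rw [coe_basisOfLinearIndependentOfCardEqFinrank] at hb
    rw [← hb, Submodule.span_le]
    rintro x ⟨⟨t, c⟩, rfl⟩
    apply Submodule.mem_iSup_of_mem t
    apply Submodule.subset_span
    cases c
    · exact Or.inl rfl
    · exact Or.inr rfl

end

/-- `V^{⊗k}` (with `k = n+1`) is the internal direct sum of the irreducible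
submodules `V_s` over subsets `s ⊆ {1,…,k-1}`; `V_s` has highest weight
`[|s|+1, k-1-|s|]`, and for each `ℓ` the number of summands of highest weight
`[ℓ+1, k-1-ℓ]` is the number `(k-1 choose ℓ)` of `ℓ`-element subsets. -/
theorem tensor_decomposition (n : ℕ) :
    DirectSum.IsInternal (fun s : Finset (Fin n) => Vsub s) ∧
    (∀ s : Finset (Fin n),
      H1op (n + 1) (vStd s) = ((s.card : ℂ) + 1) • vStd s ∧
      H2op (n + 1) (vStd s) = ((n : ℂ) - (s.card : ℂ)) • vStd s) ∧
    (∀ ℓ : ℕ, ((Finset.univ : Finset (Finset (Fin n))).filter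
      (fun s => s.card = ℓ)).card = n.choose ℓ) := by
  refine ⟨Vsub_isInternal n, fun s => ⟨H1_vStd s, H2_vStd s⟩, fun ℓ => ?_⟩
  have h : (Finset.univ.filter (fun s : Finset (Fin n) => s.card = ℓ))
      = Finset.powersetCard ℓ (Finset.univ : Finset (Fin n)) := by
    rw [Finset.powersetCard_eq_filter, Finset.powerset_univ]
  rw [h, Finset.card_powersetCard, Finset.card_univ, Fintype.card_fin]
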